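/- Let T_C be a complete binary tree of depth D with parameters l_v ∈ [0,1] and leaves forced to satisfy l_v = 1, and suppose each leaf vertex v of an internal tree emits a token with probability p(x|v) where ∑_{x ∈ V} p(x|v) = 1 for a finite vocabulary V. Then the total probability mass ∑_{N=1}^{2^D} ∑_{x_{1:N}} ∑_{T : |L(T)|=N} p(T)·∏_{n=1}^N p(x_n | L_n(T)) equals 1. -/
import Mathlib


/-- Full binary trees: every vertex has 0 or 2 children. -/
inductive FBT where
  | leaf : FBT
  | node : FBT → FBT → FBT
deriving DecidableEq

namespace FBT

/-- Depth of a full binary tree. -/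
def depth : FBT → ℕ
  | leaf => 0
  | node a b => max a.depth b.depth + 1

/-- Positions (reversed root-paths: head is the edge nearest the vertex) of the
leaves of `T`, in left-to-right order. -/
def leaves : FBT → List (List Bool)
  | leaf => [[]]
  | node a b => a.leaves.map (· ++ [false]) ++ b.leaves.map (· ++ [true])

/-- Total number of vertices. -/
def numNodes : FBT → ℕ
  | leaf => 1
  | node a b => a.numNodes + b.numNodes + 1

/-- Number of internal (non-leaf) vertices. -/
def internals : FBT → ℕ
  | leaf => 0
  | node a b => a.internals + b.internals + 1

/-- The recursive probability function π of the stick-breaking prior: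
`pi l T pos` where `pos` is the (reversed) position of the root of `T`. -/
def pi (l : List Bool → ℝ) : FBT → List Bool → ℝ
  | leaf, pos => l pos
  | node a b, pos => (1 - l pos) * pi l a (false :: pos) * pi l b (true :: pos)

/-- Probability of an internal tree: `p(T) = π(root)`. -/
def pTree (l : List Bool → ℝ) (T : FBT) : ℝ := pi l T []

/-- The memoized value m̃, with `m̃(parent(root)) = 1`. -/
noncomputable def mt (l : List Bool → ℝ) : List Bool → ℝ
  | [] => 1 - l []
  | (b :: p) => Real.sqrt (mt l p) * (1 - l (b :: p))

/-- The memoized value m at a vertex: `m(v) = m̃(parent v)^(1/2) · l v`. -/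
noncomputable def mleaf (l : List Bool → ℝ) : List Bool → ℝ
  | [] => l []
  | (b :: p) => Real.sqrt (mt l p) * l (b :: p)

/-- `m̃(parent v)`, with the convention `m̃(parent root) = 1`. -/
noncomputable def mparent (l : List Bool → ℝ) : List Bool → ℝ
  | [] => 1
  | (_ :: p) => mt l p

/-- The set of internal trees of the complete binary tree of depth `D`,
i.e. full binary trees of depth at most `D`. -/
def trees : ℕ → Finset FBT
  | 0 => {leaf}
  | (D+1) => insert leaf ((trees D ×ˢ trees D).image (fun p => node p.1 p.2))

/-- Consecutive-leaf pairs of a single tree. -/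
def transitions (T : FBT) : Finset (List Bool × List Bool) :=
  (T.leaves.zip T.leaves.tail).toFinset

/-- The set `S(T_C)` of successive leaf transitions of the complete binary
tree of depth `D`. -/
def S (D : ℕ) : Finset (List Bool × List Bool) := (trees D).biUnion transitions

/-- The left boundary of the complete binary tree of depth `D`. -/
def Bl (D : ℕ) : Finset (List Bool) :=
  (Finset.range (D+1)).image (fun k => List.replicate k false)

/-- The right boundary of the complete binary tree of depth `D`. -/
def Br (D : ℕ) : Finset (List Bool) :=
  (Finset.range (D+1)).image (fun k => List.replicate k true)

/-- The marginalisation dynamic-programming table (indexed from `n = 1`). -/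
def M (S : Finset (List Bool × List Bool)) (Bl : Finset (List Bool))
    (w : ℕ → List Bool → ℝ) (mw : List Bool → ℝ) : ℕ → List Bool → ℝ
  | 0, _ => 0
  | 1, v => if v ∈ Bl then w 1 v * mw v else 0
  | (n+2), v => w (n+2) v * mw v *
      ∑ p ∈ S.filter (fun p => p.2 = v), M S Bl w mw (n+1) p.1

/-- The Viterbi-style max-product dynamic-programming table. -/
def Mstar (S : Finset (List Bool × List Bool)) (Bl : Finset (List Bool))
    (w : ℕ → List Bool → NNReal) (mw : List Bool → NNReal) : ℕ → List Bool → NNReal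
  | 0, _ => 0
  | 1, v => if v ∈ Bl then w 1 v * mw v else 0
  | (n+2), v => w (n+2) v * mw v *
      (S.filter (fun p => p.2 = v)).sup (fun p => Mstar S Bl w mw (n+1) p.1)

/-- The complete binary tree of depth `D`, as a full binary tree. -/
def completeTree : ℕ → FBT
  | 0 => leaf
  | (D+1) => node (completeTree D) (completeTree D)

end FBT

lemma FBT_leaves_pos (T : FBT) : 1 ≤ T.leaves.length := by
  induction T with
  | leaf => simp [FBT.leaves]
  | node a b ha hb => simp [FBT.leaves]; omega

lemma FBT_leaves_le {D : ℕ} : ∀ {T : FBT}, T ∈ FBT.trees D → T.leaves.length ≤ 2 ^ D := by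
  induction D with
  | zero => intro T h; simp [FBT.trees] at h; subst h; simp [FBT.leaves]
  | succ D ih =>
    intro T h
    simp [FBT.trees] at h
    rcases h with h | ⟨a, b, ⟨ha, hb⟩, rfl⟩
    · subst h; simp [FBT.leaves]
      exact Nat.one_le_two_pow
    · have := ih ha; have := ih hb
      simp [FBT.leaves, pow_succ]; omega

lemma sum_pi_eq_one (D : ℕ) (l : List Bool → ℝ)
    (hleaf : ∀ v : List Bool, v.length = D → l v = 1) :
    ∀ (d : ℕ) (pos : List Bool), pos.length + d = D →
      ∑ T ∈ FBT.trees d, FBT.pi l T pos = 1 := by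
  intro d
  induction d with
  | zero =>
    intro pos hpos
    simp [FBT.trees, FBT.pi]
    exact hleaf pos (by omega)
  | succ d ih =>
    intro pos hpos
    have hnotmem : FBT.leaf ∉ (FBT.trees d ×ˢ FBT.trees d).image
        (fun p => FBT.node p.1 p.2) := by
      simp
    rw [FBT.trees, Finset.sum_insert hnotmem, Finset.sum_image (by
      intro p hp q hq h
      simp only [FBT.node.injEq] at h
      exact Prod.ext h.1 h.2)]
    have : ∑ p ∈ FBT.trees d ×ˢ FBT.trees d, FBT.pi l (FBT.node p.1 p.2) pos
        = (1 - l pos) * ((∑ a ∈ FBT.trees d, FBT.pi l a (false :: pos)) *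
          (∑ b ∈ FBT.trees d, FBT.pi l b (true :: pos))) := by
      rw [Finset.sum_product, Finset.sum_mul_sum, Finset.mul_sum]
      apply Finset.sum_congr rfl
      intro a _
      rw [Finset.mul_sum]
      apply Finset.sum_congr rfl
      intro b _
      simp [FBT.pi]; ring
    rw [this, ih (false :: pos) (by simp; omega), ih (true :: pos) (by simp; omega)]
    simp [FBT.pi]

/-- the generative model (tree prior with leaf parameters 1,
plus normalised token emission probabilities) assigns total probability 1 to
all token sequences. -/
theorem stmt11 (D : ℕ) (V : Type*) [Fintype V] (l : List Bool → ℝ)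
    (e : List Bool → V → ℝ)
    (h01 : ∀ v : List Bool, 0 ≤ l v ∧ l v ≤ 1)
    (hleaf : ∀ v : List Bool, v.length = D → l v = 1)
    (he0 : ∀ v x, 0 ≤ e v x) (he1 : ∀ v, ∑ x : V, e v x = 1) :
    ∑ N ∈ Finset.Icc 1 (2 ^ D), ∑ xs : Fin N → V,
      ∑ T ∈ (FBT.trees D).filter (fun T => T.leaves.length = N),
        FBT.pTree l T * ∏ n : Fin N, e (T.leaves.getD n.val []) (xs n) = 1 := by
  have step1 : ∀ N : ℕ, ∑ xs : Fin N → V,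
      ∑ T ∈ (FBT.trees D).filter (fun T => T.leaves.length = N),
        FBT.pTree l T * ∏ n : Fin N, e (T.leaves.getD n.val []) (xs n)
      = ∑ T ∈ (FBT.trees D).filter (fun T => T.leaves.length = N), FBT.pTree l T := by
    intro N
    rw [Finset.sum_comm]
    apply Finset.sum_congr rfl
    intro T _
    rw [← Finset.mul_sum]
    have : ∑ xs : Fin N → V, ∏ n : Fin N, e (T.leaves.getD n.val []) (xs n)
        = ∏ n : Fin N, ∑ x : V, e (T.leaves.getD n.val []) x := by
      rw [Finset.prod_univ_sum]
      rw [← Fintype.piFinset_univ]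
    rw [this]
    simp [he1]
  simp only [step1]
  rw [Finset.sum_fiberwise_of_maps_to (g := fun T : FBT => T.leaves.length)
    (fun T hT => by
      simp only [Finset.mem_Icc]
      exact ⟨FBT_leaves_pos T, FBT_leaves_le hT⟩)]
  exact sum_pi_eq_one D l hleaf D [] (by simp)
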